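/- Let (W_∗, F^∗) be an ℝ-mixed Hodge structure on V. Then there exists a ℂ-linear automorphism b of V_ℂ such that (i) b(W_i ⊗ ℂ) = W_i ⊗ ℂ and (b − id)(W_i ⊗ ℂ) ⊆ W_{i-1} ⊗ ℂ for every i, (ii) (W_∗, bF^∗) is an ℝ-mixed Hodge structure on V, and (iii) (W_∗, bF^∗) is ℝ-split: its Deligne subspaces Ĩ^{p,q} satisfy σ(Ĩ^{p,q}) = Ĩ^{q,p} for all p,q. -/

import Mathlib

open TensorProduct

noncomputable section

namespace MHS

instance : RingHomSurjective (starRingEnd ℂ) :=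
  ⟨fun x => ⟨star x, star_star x⟩⟩

variable (V : Type*) [AddCommGroup V] [Module ℝ V]

/-- The inclusion `v ↦ 1 ⊗ v` of `V` into its complexification `ℂ ⊗[ℝ] V`. -/
def incl : V →ₗ[ℝ] ℂ ⊗[ℝ] V := TensorProduct.mk ℝ ℂ V 1

/-- Complex conjugation on the complexification `ℂ ⊗[ℝ] V`, as a
conjugate-linear (i.e. `starRingEnd ℂ`-semilinear) map. -/
def conjC : (ℂ ⊗[ℝ] V) →ₛₗ[starRingEnd ℂ] (ℂ ⊗[ℝ] V) where
  toFun := LinearMap.rTensor V (Complex.conjAe.toLinearMap : ℂ →ₗ[ℝ] ℂ)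
  map_add' := fun x y => map_add _ x y
  map_smul' := by
    intro c x
    induction x using TensorProduct.induction_on with
    | zero => simp
    | tmul a v =>
        simp only [TensorProduct.smul_tmul', LinearMap.rTensor_tmul, smul_eq_mul,
          AlgEquiv.toLinearMap_apply, map_mul, starRingEnd_apply]
        rfl
    | add x y hx hy =>
        simp only [smul_add, map_add]
        exact congrArg₂ (· + ·) hx hy

/-- The complexification `W ⊗ ℂ` of a real subspace `W ⊆ V`, as a complex
subspace of `ℂ ⊗[ℝ] V`. -/
def cx (W : Submodule ℝ V) : Submodule ℂ (ℂ ⊗[ℝ] V) :=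
  Submodule.span ℂ (incl V '' (W : Set V))

variable {V}

/-- `(W, F)` is an `ℝ`-mixed Hodge structure on `V`:  `W` is an increasing
exhaustive filtration of `V` by real subspaces, `F` a decreasing exhaustive
filtration of `ℂ ⊗[ℝ] V` by complex subspaces, and for every `n, p` the induced
filtration on `Gr^W_n = (W n ⊗ ℂ)/(W (n-1) ⊗ ℂ)` satisfies the weight `n`
Hodge decomposition conditions (expressed here at the level of preimages in
`W n ⊗ ℂ` of the relevant subspaces of the quotient). -/
structure IsRMHS (W : ℤ → Submodule ℝ V) (F : ℤ → Submodule ℂ (ℂ ⊗[ℝ] V)) : Prop where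
  monoW : Monotone W
  antiF : Antitone F
  w_bot : ∃ a : ℤ, ∀ i ≤ a, W i = ⊥
  w_top : ∃ b : ℤ, ∀ i, b ≤ i → W i = ⊤
  f_top : ∃ a : ℤ, ∀ p ≤ a, F p = ⊤
  f_bot : ∃ b : ℤ, ∀ p, b ≤ p → F p = ⊥
  gr_inf : ∀ n p : ℤ,
      ((F p ⊓ cx V (W n)) ⊔ cx V (W (n-1))) ⊓
        ((((F (n+1-p)).map (conjC V)) ⊓ cx V (W n)) ⊔ cx V (W (n-1)))
      = cx V (W (n-1))
  gr_sup : ∀ n p : ℤ,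
      (F p ⊓ cx V (W n)) ⊔ ((((F (n+1-p)).map (conjC V)) ⊓ cx V (W n)) ⊔ cx V (W (n-1)))
      = cx V (W n)

/-- The subspace `R^{p,q} = (W_{p+q} ⊗ ℂ) ∩ F^p`. -/
def Rpq (W : ℤ → Submodule ℝ V) (F : ℤ → Submodule ℂ (ℂ ⊗[ℝ] V)) (p q : ℤ) :
    Submodule ℂ (ℂ ⊗[ℝ] V) :=
  cx V (W (p + q)) ⊓ F p

/-- The subspace
`L^{p,q} = (W_{p+q} ⊗ ℂ) ∩ σ(F^q) + Σ_{i ≥ 2} (W_{p+q-i} ⊗ ℂ) ∩ σ(F^{q-i+1})`. -/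
def Lpq (W : ℤ → Submodule ℝ V) (F : ℤ → Submodule ℂ (ℂ ⊗[ℝ] V)) (p q : ℤ) :
    Submodule ℂ (ℂ ⊗[ℝ] V) :=
  (cx V (W (p + q)) ⊓ (F q).map (conjC V)) ⊔
    ⨆ i : ℤ, ⨆ _ : 2 ≤ i, (cx V (W (p + q - i)) ⊓ (F (q - i + 1)).map (conjC V))

/-- The Deligne subspace `I^{p,q} = R^{p,q} ∩ L^{p,q}`. -/
def Ipq (W : ℤ → Submodule ℝ V) (F : ℤ → Submodule ℂ (ℂ ⊗[ℝ] V)) (p q : ℤ) :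
    Submodule ℂ (ℂ ⊗[ℝ] V) :=
  Rpq W F p q ⊓ Lpq W F p q

end MHS

/-!
On each graded piece `Gr^W_m` the filtration `F` induces a pure Hodge structure of weight `m`,
with summands `H^{p, m-p}`. Lift every summand to `V_ℂ` twice: to `Z^{p, m-p} ⊆ F^p`, and to
`B^{p, m-p}` chosen so that conjugation permutes the lifts (take `Z` when `2p > m`, the conjugate
of `Z^{m-p, p}` when `2p < m`, and the complexification of a real complement when `2p = m`).
Both families decompose `V_ℂ`, and `Z^{p,q} ⊔ W_{m-1} = B^{p,q} ⊔ W_{m-1}`, so the automorphism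
`b` mapping each `Z^{p,q}` onto `B^{p,q}` along `W_{m-1}` is the identity on `Gr^W`. Hence
`(W, bF)` is again a mixed Hodge structure, and it is split by `B`, whose Deligne subspaces are
`I^{p,q} = B^{p,q}`; conjugation then swaps `I^{p,q}` and `I^{q,p}`.
-/

section Lattice

variable {α : Type*} [CompleteLattice α]

theorem iSupIndep_of_disjoint_iSup_lt [IsModularLattice α] [IsCompactlyGenerated α]
    {ι β : Type*} [LinearOrder β] {key : ι → β} (hkey : Function.Injective key) {f : ι → α}
    (h : ∀ i, Disjoint (f i) (⨆ (j) (_ : key j < key i), f j)) : iSupIndep f := by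
  classical
  refine iSupIndep_iff_supIndep.mpr fun s => ?_
  induction s using Finset.induction_on_max_value key with
  | empty => exact Finset.supIndep_empty f
  | insert i s hi hle ih =>
    refine ih.insert ((h i).mono_right (Finset.sup_le fun j hj => ?_))
    exact le_iSup₂_of_le j ((hle j hj).lt_of_ne (hkey.ne (ne_of_mem_of_not_mem hj hi))) le_rfl

theorem iSupIndep.biSup_inf_biSup [IsModularLattice α] [IsCompactlyGenerated α] {ι : Type*}
    {f : ι → α} (hf : iSupIndep f) (s t : Set ι) :
    (⨆ i ∈ s, f i) ⊓ (⨆ i ∈ t, f i) = ⨆ i ∈ s ∩ t, f i := by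
  refine le_antisymm ?_ (le_inf (biSup_mono fun _ hi => hi.1) (biSup_mono fun _ hi => hi.2))
  rw [← Set.inter_union_sdiff s t, iSup_union, sup_inf_assoc_of_le _ (biSup_mono fun _ hi => hi.2),
    (hf.disjoint_biSup_biSup Set.disjoint_sdiff_left).eq_bot, sup_bot_eq, Set.inter_union_sdiff]

theorem le_sup_biSup_of_le_sup_pred {f g : ℤ → α} {a : ℤ} {c : α} (hbase : ∀ m ≤ a, f m ≤ c)
    (hstep : ∀ m, f m ≤ f (m - 1) ⊔ g m) (m : ℤ) : f m ≤ c ⊔ ⨆ k ≤ m, g k := by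
  obtain hm | hm := le_or_gt m a
  · exact le_sup_of_le_left (hbase m hm)
  replace hm := hm.le
  induction m, hm using Int.leInduction with
  | base => exact le_sup_of_le_left (hbase a le_rfl)
  | succ n _ ih =>
    have hmono : ⨆ k ≤ n, g k ≤ ⨆ k ≤ n + 1, g k := iSup₂_mono' fun k hk => ⟨k, by omega, le_rfl⟩
    calc f (n + 1) ≤ f n ⊔ g (n + 1) := by simpa using hstep (n + 1)
      _ ≤ c ⊔ ⨆ k ≤ n + 1, g k :=
        sup_le (ih.trans (sup_le_sup_left hmono c))
          (le_sup_of_le_right (le_iSup₂_of_le (n + 1) le_rfl le_rfl))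

theorem exists_le_disjoint_sup_eq [IsModularLattice α] [ComplementedLattice α] (x y : α) :
    ∃ z ≤ x, Disjoint z y ∧ z ⊔ y = x ⊔ y := by
  obtain ⟨z, hdisj, hsup⟩ := IsModularLattice.exists_disjoint_and_sup_eq (inf_le_left : x ⊓ y ≤ x)
  have hzx : z ≤ x := hsup ▸ le_sup_right
  refine ⟨z, hzx, ?_, ?_⟩
  · rw [disjoint_iff, ← inf_eq_left.mpr hzx, inf_assoc]
    exact disjoint_iff.mp hdisj.symm
  · rw [← hsup, sup_comm (x ⊓ y), sup_assoc, sup_eq_right.mpr (inf_le_right : x ⊓ y ≤ y)]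

end Lattice

section LinearAlgebra

variable {R M : Type*} [Ring R] [AddCommGroup M] [Module R M]

theorem exists_linearEquiv_sub_mem {Z B N : Submodule R M} (hZ : Disjoint Z N)
    (hB : Disjoint B N) (h : Z ⊔ N = B ⊔ N) : ∃ e : Z ≃ₗ[R] B, ∀ z : Z, (e z : M) - z ∈ N := by
  have inj {Y : Submodule R M} (hY : Disjoint Y N) : Function.Injective (N.mkQ ∘ₗ Y.subtype) := by
    rw [← LinearMap.ker_eq_bot, LinearMap.ker_comp, Submodule.ker_mkQ,
      ← Submodule.disjoint_iff_comap_eq_bot]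
    exact hY
  have range_eq (Y : Submodule R M) : LinearMap.range (N.mkQ ∘ₗ Y.subtype) = (Y ⊔ N).map N.mkQ := by
    rw [LinearMap.range_comp, Submodule.range_subtype, Submodule.map_sup, Submodule.mkQ_map_self,
      sup_bot_eq]
  -- `Z ≃ (Z ⊔ N) ⧸ N = (B ⊔ N) ⧸ N ≃ B`
  let e := (LinearEquiv.ofInjective _ (inj hZ)).trans
    ((LinearEquiv.ofEq _ _ (by rw [range_eq, range_eq, h])).trans
      (LinearEquiv.ofInjective _ (inj hB)).symm)
  refine ⟨e, fun z => (Submodule.Quotient.eq N).mp ?_⟩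
  exact congrArg Subtype.val ((LinearEquiv.ofInjective _ (inj hB)).apply_symm_apply
    ⟨N.mkQ z, by rw [range_eq, ← h, ← range_eq]; exact ⟨z, rfl⟩⟩)

theorem map_inf_sup_eq_inf_sup (b : M ≃ₗ[R] M) {N N' : Submodule R M}
    (hN : N.map (b : M →ₗ[R] M) = N) (hb : ∀ x ∈ N, b x - x ∈ N') (A : Submodule R M) :
    A.map (b : M →ₗ[R] M) ⊓ N ⊔ N' = A ⊓ N ⊔ N' := by
  refine le_antisymm (sup_le ?_ le_sup_right) (sup_le ?_ le_sup_right)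
  · rintro _ ⟨⟨a, ha, rfl⟩, hbN⟩
    have haN : a ∈ N := by
      rw [← hN] at hbN
      obtain ⟨a', ha', hba'⟩ := hbN
      rwa [← b.injective hba']
    rw [LinearEquiv.coe_coe, ← add_sub_cancel a (b a)]
    exact Submodule.add_mem _ (Submodule.mem_sup_left ⟨ha, haN⟩)
      (Submodule.mem_sup_right (hb a haN))
  · rintro a ⟨ha, haN⟩
    rw [← sub_sub_cancel (b a) a]
    exact Submodule.sub_mem _ (Submodule.mem_sup_left ⟨⟨a, ha, rfl⟩, hN ▸ ⟨a, haN, rfl⟩⟩)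
      (Submodule.mem_sup_right (hb a haN))

theorem exists_linearEquiv_map_eq {ι : Type*} {Z B N : ι → Submodule R M}
    (hZ : iSupIndep Z) (hZtop : ⨆ i, Z i = ⊤) (hB : iSupIndep B) (hBtop : ⨆ i, B i = ⊤)
    (hZN : ∀ i, Disjoint (Z i) (N i)) (hBN : ∀ i, Disjoint (B i) (N i))
    (hZB : ∀ i, Z i ⊔ N i = B i ⊔ N i) :
    ∃ b : M ≃ₗ[R] M, ∀ i, (Z i).map (b : M →ₗ[R] M) = B i ∧ ∀ z ∈ Z i, b z - z ∈ N i := by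
  classical
  choose e he using fun i => exists_linearEquiv_sub_mem (hZN i) (hBN i) (hZB i)
  let b := (hZ.linearEquiv hZtop).symm ≪≫ₗ DFinsupp.mapRange.linearEquiv e ≪≫ₗ
    hB.linearEquiv hBtop
  have hb : ∀ i (z : Z i), b z = e i z := by
    intro i z
    simp [b, hZ.linearEquiv_symm_apply hZtop z.2]
  refine ⟨b, fun i => ⟨le_antisymm ?_ fun x hx => ?_, fun z hz => hb i ⟨z, hz⟩ ▸ he i ⟨z, hz⟩⟩⟩
  · rintro _ ⟨z, hz, rfl⟩
    rw [LinearEquiv.coe_coe, hb i ⟨z, hz⟩]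
    exact (e i ⟨z, hz⟩).2
  · refine ⟨(e i).symm ⟨x, hx⟩, ((e i).symm ⟨x, hx⟩).2, ?_⟩
    rw [LinearEquiv.coe_coe, hb, LinearEquiv.apply_symm_apply]

end LinearAlgebra

namespace MHS

variable {V : Type*} [AddCommGroup V] [Module ℝ V]

def re : (ℂ ⊗[ℝ] V) →ₗ[ℝ] V := TensorProduct.lift (LinearMap.lsmul ℝ V ∘ₗ Complex.reLm)

def im : (ℂ ⊗[ℝ] V) →ₗ[ℝ] V := TensorProduct.lift (LinearMap.lsmul ℝ V ∘ₗ Complex.imLm)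

@[simp] lemma re_tmul (c : ℂ) (v : V) : re (c ⊗ₜ[ℝ] v) = c.re • v := rfl

@[simp] lemma im_tmul (c : ℂ) (v : V) : im (c ⊗ₜ[ℝ] v) = c.im • v := rfl

lemma incl_apply (v : V) : incl V v = (1 : ℂ) ⊗ₜ[ℝ] v := rfl

@[simp] lemma re_incl (v : V) : re (incl V v) = v := by simp [incl_apply]

@[simp] lemma im_incl (v : V) : im (incl V v) = 0 := by simp [incl_apply]

lemma incl_re_add_I_smul_incl_im (x : ℂ ⊗[ℝ] V) :
    incl V (re x) + Complex.I • incl V (im x) = x := by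
  induction x using TensorProduct.induction_on with
  | zero => simp
  | tmul c v =>
    simp only [re_tmul, im_tmul, incl_apply, TensorProduct.tmul_smul, TensorProduct.smul_tmul']
    rw [← TensorProduct.add_tmul]
    congr 1
    apply Complex.ext <;> simp
  | add x y hx hy =>
    rw [map_add, map_add, map_add, map_add, smul_add, add_add_add_comm, hx, hy]

lemma re_smul (c : ℂ) (x : ℂ ⊗[ℝ] V) : re (c • x) = c.re • re x - c.im • im x := by
  induction x using TensorProduct.induction_on with
  | zero => simp
  | tmul a v =>
    simp only [TensorProduct.smul_tmul', re_tmul, im_tmul, smul_eq_mul, Complex.mul_re, sub_smul,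
      mul_smul]
  | add x y hx hy => simp only [smul_add, map_add, hx, hy]; abel

lemma im_smul (c : ℂ) (x : ℂ ⊗[ℝ] V) : im (c • x) = c.re • im x + c.im • re x := by
  induction x using TensorProduct.induction_on with
  | zero => simp
  | tmul a v =>
    simp only [TensorProduct.smul_tmul', re_tmul, im_tmul, smul_eq_mul, Complex.mul_im, add_smul,
      mul_smul]
  | add x y hx hy => simp only [smul_add, map_add, hx, hy]; abel

lemma mem_cx {S : Submodule ℝ V} {x : ℂ ⊗[ℝ] V} : x ∈ cx V S ↔ re x ∈ S ∧ im x ∈ S := by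
  refine ⟨fun hx => ?_, fun ⟨hre, him⟩ => ?_⟩
  · induction hx using Submodule.span_induction with
    | mem y hy => obtain ⟨v, hv, rfl⟩ := hy; simpa using hv
    | zero => simp
    | add y z _ _ hy hz => simpa using ⟨S.add_mem hy.1 hz.1, S.add_mem hy.2 hz.2⟩
    | smul c y _ hy =>
      rw [re_smul, im_smul]
      exact ⟨S.sub_mem (S.smul_mem _ hy.1) (S.smul_mem _ hy.2),
        S.add_mem (S.smul_mem _ hy.2) (S.smul_mem _ hy.1)⟩
  · rw [← incl_re_add_I_smul_incl_im x]
    exact Submodule.add_mem _ (Submodule.subset_span ⟨_, hre, rfl⟩)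
      (Submodule.smul_mem _ _ (Submodule.subset_span ⟨_, him, rfl⟩))

lemma cx_inf (S T : Submodule ℝ V) : cx V (S ⊓ T) = cx V S ⊓ cx V T := by
  ext x
  simp only [mem_cx, Submodule.mem_inf]
  tauto

def realPoints (X : Submodule ℂ (ℂ ⊗[ℝ] V)) : Submodule ℝ V :=
  (X.restrictScalars ℝ).comap (incl V)

lemma gc_cx_realPoints : GaloisConnection (cx V) (realPoints (V := V)) := fun S X => by
  rw [cx, Submodule.span_le, Set.image_subset_iff]
  rfl

lemma cx_mono {S T : Submodule ℝ V} (h : S ≤ T) : cx V S ≤ cx V T :=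
  gc_cx_realPoints.monotone_l h

@[simp] lemma cx_bot : cx V (⊥ : Submodule ℝ V) = ⊥ :=
  gc_cx_realPoints.l_bot

@[simp] lemma cx_top : cx V (⊤ : Submodule ℝ V) = ⊤ := by
  ext x
  simp [mem_cx]

@[simp] lemma conjC_incl (v : V) : conjC V (incl V v) = incl V v := by
  change LinearMap.rTensor V _ ((1 : ℂ) ⊗ₜ[ℝ] v) = (1 : ℂ) ⊗ₜ[ℝ] v
  simp

@[simp] lemma conjC_conjC (x : ℂ ⊗[ℝ] V) : conjC V (conjC V x) = x := by
  induction x using TensorProduct.induction_on with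
  | zero => simp
  | tmul c v =>
    change (starRingEnd ℂ (starRingEnd ℂ c)) ⊗ₜ[ℝ] v = c ⊗ₜ[ℝ] v
    simp
  | add x y hx hy => rw [map_add, map_add, hx, hy]

lemma conjC_eq (x : ℂ ⊗[ℝ] V) :
    conjC V x = incl V (re x) - Complex.I • incl V (im x) := by
  conv_lhs => rw [← incl_re_add_I_smul_incl_im x]
  rw [map_add, LinearMap.map_smulₛₗ, conjC_incl, conjC_incl, Complex.conj_I, neg_smul,
    ← sub_eq_add_neg]

lemma mem_map_conjC {X : Submodule ℂ (ℂ ⊗[ℝ] V)} {x : ℂ ⊗[ℝ] V} :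
    x ∈ X.map (conjC V) ↔ conjC V x ∈ X :=
  ⟨fun ⟨y, hy, hyx⟩ => hyx ▸ (conjC_conjC y).symm ▸ hy, fun hx => ⟨_, hx, conjC_conjC x⟩⟩

lemma map_conjC_map_conjC (X : Submodule ℂ (ℂ ⊗[ℝ] V)) : (X.map (conjC V)).map (conjC V) = X := by
  ext x
  rw [mem_map_conjC, mem_map_conjC, conjC_conjC]

lemma map_conjC_inf (X Y : Submodule ℂ (ℂ ⊗[ℝ] V)) :
    (X ⊓ Y).map (conjC V) = X.map (conjC V) ⊓ Y.map (conjC V) := by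
  ext x
  simp only [mem_map_conjC, Submodule.mem_inf]

@[simp] lemma map_conjC_cx (S : Submodule ℝ V) : (cx V S).map (conjC V) = cx V S := by
  rw [cx, Submodule.map_span, ← Set.image_comp]
  congr 2
  ext v
  simp

lemma eq_cx_realPoints {X : Submodule ℂ (ℂ ⊗[ℝ] V)} (hX : X.map (conjC V) = X) :
    X = cx V (realPoints X) := by
  refine le_antisymm (fun x hx => ?_) (gc_cx_realPoints.l_u_le X)
  have hσx : conjC V x ∈ X := by rw [← hX]; exact ⟨x, hx, rfl⟩
  set a := incl V (re x)
  set b := incl V (im x)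
  have hx' : x = a + Complex.I • b := (incl_re_add_I_smul_incl_im x).symm
  have hσ : conjC V x = a - Complex.I • b := conjC_eq x
  have ha : (2 : ℂ) • a = x + conjC V x := by rw [hσ, hx']; module
  have hb : (2 * Complex.I) • b = x - conjC V x := by rw [hσ, hx']; module
  refine mem_cx.mpr ⟨(X.smul_mem_iff (two_ne_zero : (2 : ℂ) ≠ 0)).mp ?_,
    (X.smul_mem_iff (?_ : 2 * Complex.I ≠ 0)).mp ?_⟩
  · exact ha ▸ X.add_mem hx hσx
  · simp
  · exact hb ▸ X.sub_mem hx hσx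

lemma exists_conj_stable_compl {H : Submodule ℂ (ℂ ⊗[ℝ] V)} (hH : H.map (conjC V) = H)
    {N : Submodule ℝ V} (hN : cx V N ≤ H) :
    ∃ C : Submodule ℂ (ℂ ⊗[ℝ] V), C.map (conjC V) = C ∧ Disjoint C (cx V N) ∧ C ⊔ cx V N = H := by
  obtain ⟨C, hdisj, hsup⟩ :=
    IsModularLattice.exists_disjoint_and_sup_eq (gc_cx_realPoints.le_iff_le.mp hN)
  refine ⟨cx V C, map_conjC_cx C, ?_, ?_⟩
  · rw [disjoint_iff, ← cx_inf, inf_comm, hdisj.eq_bot, cx_bot]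
  · rw [← gc_cx_realPoints.l_sup, sup_comm, hsup, ← eq_cx_realPoints hH]

variable {W : ℤ → Submodule ℝ V} {F : ℤ → Submodule ℂ (ℂ ⊗[ℝ] V)}

variable (W F) in
/-- The preimage in `W_n ⊗ ℂ` of the filtration induced by `F` on `Gr^W_n`. -/
def grFil (n p : ℤ) : Submodule ℂ (ℂ ⊗[ℝ] V) :=
  F p ⊓ cx V (W n) ⊔ cx V (W (n - 1))

variable (W F) in
/-- The preimage in `W_n ⊗ ℂ` of the Hodge summand `H^{p, n-p}` of `Gr^W_n`. -/
def hodgePiece (n p : ℤ) : Submodule ℂ (ℂ ⊗[ℝ] V) :=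
  grFil W F n p ⊓ (grFil W F n (n - p)).map (conjC V)

lemma map_conjC_grFil (n q : ℤ) :
    (grFil W F n q).map (conjC V) = (F q).map (conjC V) ⊓ cx V (W n) ⊔ cx V (W (n - 1)) := by
  rw [grFil, Submodule.map_sup, map_conjC_inf, map_conjC_cx, map_conjC_cx]

lemma map_conjC_hodgePiece (n p : ℤ) :
    (hodgePiece W F n p).map (conjC V) = hodgePiece W F n (n - p) := by
  rw [hodgePiece, hodgePiece, map_conjC_inf, map_conjC_map_conjC, sub_sub_cancel, inf_comm]

lemma le_grFil (n p : ℤ) : cx V (W (n - 1)) ≤ grFil W F n p :=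
  le_sup_right

lemma le_hodgePiece (n p : ℤ) : cx V (W (n - 1)) ≤ hodgePiece W F n p :=
  le_inf (le_grFil n p) (map_conjC_cx (W (n - 1)) ▸ Submodule.map_mono (le_grFil n (n - p)))

namespace IsRMHS

variable (h : IsRMHS W F)
include h

lemma cx_mono {m n : ℤ} (hmn : m ≤ n) : cx V (W m) ≤ cx V (W n) :=
  MHS.cx_mono (h.monoW hmn)

lemma grFil_le (n p : ℤ) : grFil W F n p ≤ cx V (W n) :=
  sup_le inf_le_right (h.cx_mono (by omega))

lemma grFil_anti (n : ℤ) {p p' : ℤ} (hpp' : p ≤ p') : grFil W F n p' ≤ grFil W F n p :=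
  sup_le_sup_right (inf_le_inf_right _ (h.antiF hpp')) _

lemma grFil_inf_conj (n p : ℤ) :
    grFil W F n p ⊓ (grFil W F n (n + 1 - p)).map (conjC V) = cx V (W (n - 1)) := by
  rw [map_conjC_grFil]
  exact h.gr_inf n p

lemma grFil_sup_conj (n p : ℤ) :
    grFil W F n p ⊔ (grFil W F n (n + 1 - p)).map (conjC V) = cx V (W n) := by
  rw [map_conjC_grFil, grFil, sup_assoc]
  convert h.gr_sup n p using 2
  exact sup_eq_right.mpr le_sup_right

lemma grFil_eq_sup_hodgePiece (n p : ℤ) :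
    grFil W F n p = grFil W F n (p + 1) ⊔ hodgePiece W F n p := by
  have hsup := h.grFil_sup_conj n (p + 1)
  rw [show n + 1 - (p + 1) = n - p by ring] at hsup
  rw [hodgePiece, inf_comm, ← sup_inf_assoc_of_le _ (h.grFil_anti n (by omega)), hsup,
    inf_eq_right.mpr (h.grFil_le n p)]

lemma hodgePiece_inf_grFil_succ_le (n p : ℤ) :
    hodgePiece W F n p ⊓ grFil W F n (p + 1) ≤ cx V (W (n - 1)) := by
  rw [← h.grFil_inf_conj n (p + 1), show n + 1 - (p + 1) = n - p by ring]
  exact le_inf inf_le_right (inf_le_left.trans inf_le_right)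

end IsRMHS

variable (W F) in
def IsHodgeLift (Y : ℤ × ℤ → Submodule ℂ (ℂ ⊗[ℝ] V)) : Prop :=
  ∀ m p : ℤ, Disjoint (Y (m, p)) (cx V (W (m - 1))) ∧
    Y (m, p) ⊔ cx V (W (m - 1)) = hodgePiece W F m p

namespace IsHodgeLift

variable {Y : ℤ × ℤ → Submodule ℂ (ℂ ⊗[ℝ] V)} (hY : IsHodgeLift W F Y)
include hY

lemma le_hodgePiece (m p : ℤ) : Y (m, p) ≤ hodgePiece W F m p :=
  (hY m p).2 ▸ le_sup_left

lemma conj : IsHodgeLift W F (fun i => (Y (i.1, i.1 - i.2)).map (conjC V)) := by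
  intro m p
  obtain ⟨hdisj, hsup⟩ := hY m (m - p)
  dsimp only
  rw [← map_conjC_cx (W (m - 1)), disjoint_iff, ← map_conjC_inf, hdisj.eq_bot, Submodule.map_bot,
    ← Submodule.map_sup, hsup, map_conjC_hodgePiece, sub_sub_cancel]
  exact ⟨rfl, rfl⟩

variable (h : IsRMHS W F)
include h

lemma le_cx (m p : ℤ) : Y (m, p) ≤ cx V (W m) :=
  (hY.le_hodgePiece m p).trans (inf_le_left.trans (h.grFil_le m p))

lemma grFil_eq_sup (n p : ℤ) : grFil W F n p = grFil W F n (p + 1) ⊔ Y (n, p) := by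
  rw [h.grFil_eq_sup_hodgePiece, ← (hY n p).2, ← sup_assoc, sup_right_comm,
    sup_eq_left.mpr (le_grFil n (p + 1))]

lemma grFil_le_sup (n p : ℤ) : grFil W F n p ≤ cx V (W (n - 1)) ⊔ ⨆ r ≥ p, Y (n, r) := by
  obtain ⟨b, hb⟩ := h.f_bot
  have hbase (k : ℤ) (hk : k ≤ -b) : grFil W F n (-k) ≤ cx V (W (n - 1)) := by
    rw [grFil, hb _ (by omega), bot_inf_eq, bot_sup_eq]
  have hstep (k : ℤ) : grFil W F n (-k) ≤ grFil W F n (-(k - 1)) ⊔ Y (n, -k) := by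
    rw [hY.grFil_eq_sup h n (-k), show -(k - 1) = -k + 1 by ring]
  have hreindex : ⨆ k ≤ -p, Y (n, -k) ≤ ⨆ r ≥ p, Y (n, r) :=
    iSup₂_le fun k hk => le_iSup₂_of_le (-k) (by omega) le_rfl
  have := le_sup_biSup_of_le_sup_pred hbase hstep (-p)
  rw [neg_neg] at this
  exact this.trans (sup_le_sup_left hreindex _)

lemma cx_le_sup (n : ℤ) : cx V (W n) ≤ cx V (W (n - 1)) ⊔ ⨆ r, Y (n, r) := by
  obtain ⟨a, ha⟩ := h.f_top
  have htop : grFil W F n a = cx V (W n) := by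
    rw [grFil, ha a le_rfl, top_inf_eq, sup_eq_left.mpr (h.cx_mono (by omega))]
  have hforget : ⨆ r ≥ a, Y (n, r) ≤ ⨆ r, Y (n, r) := iSup₂_le fun r _ => le_iSup_of_le r le_rfl
  rw [← htop]
  exact (hY.grFil_le_sup h n a).trans (sup_le_sup_left hforget _)

lemma cx_eq (m : ℤ) : cx V (W m) = ⨆ i ∈ {i : ℤ × ℤ | i.1 ≤ m}, Y i := by
  refine le_antisymm ?_ (iSup₂_le fun i hi => (hY.le_cx h i.1 i.2).trans (h.cx_mono hi))
  obtain ⟨a, ha⟩ := h.w_bot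
  refine (le_sup_biSup_of_le_sup_pred (f := fun k => cx V (W k)) (g := fun k => ⨆ r, Y (k, r))
    (c := ⊥) (a := a) (fun k hk => by simp [ha k hk]) (hY.cx_le_sup h) m).trans ?_
  rw [bot_sup_eq]
  exact iSup₂_le fun k hk => iSup_le fun r => le_iSup₂_of_le (k, r) hk le_rfl

lemma iSup_eq_top : ⨆ i, Y i = ⊤ := by
  obtain ⟨b, hb⟩ := h.w_top
  rw [eq_top_iff, ← cx_top, ← hb b le_rfl, hY.cx_eq h b]
  exact iSup₂_le fun i _ => le_iSup Y i

lemma iSupIndep : iSupIndep Y := by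
  -- `Y (m, p)` complements `grFil m (p + 1)` in `grFil m p`: order the lifts along the flag
  -- `… ⊆ W_{m-1} ⊆ … ⊆ grFil m (p + 1) ⊆ grFil m p ⊆ … ⊆ W_m ⊆ …`
  refine iSupIndep_of_disjoint_iSup_lt (key := fun i : ℤ × ℤ => toLex (i.1, -i.2))
    (fun i j hij => ?_) fun ⟨m, p⟩ => ?_
  · simp only [toLex_inj, Prod.mk.injEq, neg_inj] at hij
    exact Prod.ext hij.1 hij.2
  have hlt : ⨆ (j) (_ : toLex (j.1, -j.2) < toLex (m, -p)), Y j ≤ grFil W F m (p + 1) := by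
    refine iSup₂_le fun ⟨m', r⟩ hj => ?_
    rcases Prod.Lex.toLex_lt_toLex.mp hj with hm | ⟨hm, hr⟩
    · exact (hY.le_cx h m' r).trans ((h.cx_mono (by omega)).trans (le_grFil m (p + 1)))
    · obtain rfl : m' = m := hm
      exact (hY.le_hodgePiece m' r).trans (inf_le_left.trans (h.grFil_anti m' (by omega)))
  refine Disjoint.mono_right hlt (disjoint_iff.mpr (le_bot_iff.mp ?_))
  calc Y (m, p) ⊓ grFil W F m (p + 1) ≤ Y (m, p) ⊓ cx V (W (m - 1)) :=
        le_inf inf_le_left ((inf_le_inf_right _ (hY.le_hodgePiece m p)).trans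
          (h.hodgePiece_inf_grFil_succ_le m p))
    _ = ⊥ := (hY m p).1.eq_bot

lemma eq_iSup (hYF : ∀ m p, Y (m, p) ≤ F p) (p : ℤ) :
    F p = ⨆ i ∈ {i : ℤ × ℤ | p ≤ i.2}, Y i := by
  refine le_antisymm ?_ (iSup₂_le fun i hi => (hYF i.1 i.2).trans (h.antiF hi))
  obtain ⟨a, ha⟩ := h.w_bot
  obtain ⟨b, hb⟩ := h.w_top
  have hstep (m : ℤ) : F p ⊓ cx V (W m) ≤ F p ⊓ cx V (W (m - 1)) ⊔ ⨆ r ≥ p, Y (m, r) := by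
    have hS : ⨆ r ≥ p, Y (m, r) ≤ F p ⊓ cx V (W m) :=
      iSup₂_le fun r hr => le_inf ((hYF m r).trans (h.antiF hr)) (hY.le_cx h m r)
    calc F p ⊓ cx V (W m)
        ≤ F p ⊓ cx V (W m) ⊓ (cx V (W (m - 1)) ⊔ ⨆ r ≥ p, Y (m, r)) :=
          le_inf le_rfl ((le_sup_left : _ ≤ grFil W F m p).trans (hY.grFil_le_sup h m p))
      _ = F p ⊓ cx V (W m) ⊓ cx V (W (m - 1)) ⊔ ⨆ r ≥ p, Y (m, r) :=
          (inf_sup_assoc_of_le _ hS).symm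
      _ ≤ F p ⊓ cx V (W (m - 1)) ⊔ ⨆ r ≥ p, Y (m, r) :=
          sup_le_sup_right (inf_le_inf_right _ inf_le_left) _
  have := le_sup_biSup_of_le_sup_pred (f := fun m => F p ⊓ cx V (W m)) (c := ⊥) (a := a)
    (fun m hm => by simp [ha m hm]) hstep b
  rw [hb b le_rfl, cx_top, inf_top_eq, bot_sup_eq] at this
  exact this.trans (iSup₂_le fun k _ => iSup₂_le fun r hr => le_iSup₂_of_le (k, r) hr le_rfl)

end IsHodgeLift

variable (W F) in
lemma exists_isHodgeLift_le : ∃ Z, IsHodgeLift W F Z ∧ ∀ m p, Z (m, p) ≤ F p := by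
  have hlift (i : ℤ × ℤ) : ∃ C ≤ F i.2, Disjoint C (cx V (W (i.1 - 1))) ∧
      C ⊔ cx V (W (i.1 - 1)) = hodgePiece W F i.1 i.2 := by
    obtain ⟨C, hC, hdisj, hsup⟩ :=
      exists_le_disjoint_sup_eq (F i.2 ⊓ hodgePiece W F i.1 i.2) (cx V (W (i.1 - 1)))
    refine ⟨C, hC.trans inf_le_left, hdisj, hsup.trans ?_⟩
    have hle : hodgePiece W F i.1 i.2 ≤ F i.2 ⊔ cx V (W (i.1 - 1)) :=
      inf_le_left.trans (sup_le_sup_right inf_le_left _)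
    rw [inf_comm, inf_sup_assoc_of_le _ (le_hodgePiece i.1 i.2), inf_eq_left.mpr hle]
  choose Z hZF hZ using hlift
  exact ⟨Z, fun m p => hZ (m, p), fun m p => hZF (m, p)⟩

variable (W F) in
lemma exists_isHodgeLift_conj :
    ∃ B, IsHodgeLift W F B ∧ ∀ m p, (B (m, p)).map (conjC V) = B (m, m - p) := by
  obtain ⟨Z, hZ, -⟩ := exists_isHodgeLift_le W F
  have hmid (k : ℤ) := exists_conj_stable_compl (H := hodgePiece W F (2 * k) k)
    (by rw [map_conjC_hodgePiece, show 2 * k - k = k by ring]) (le_hodgePiece (2 * k) k)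
  choose C hCσ hC using hmid
  let B : ℤ × ℤ → Submodule ℂ (ℂ ⊗[ℝ] V) := fun i =>
    if i.1 < 2 * i.2 then Z i
    else if 2 * i.2 < i.1 then (Z (i.1, i.1 - i.2)).map (conjC V)
    else C i.2
  refine ⟨B, fun m p => ?_, fun m p => ?_⟩
  · simp only [B]
    split_ifs with hlt hgt
    · exact hZ m p
    · exact hZ.conj m p
    · obtain rfl : m = 2 * p := by omega
      exact hC p
  · simp only [B]
    rcases lt_trichotomy m (2 * p) with hlt | rfl | hgt
    · rw [if_pos hlt, if_neg (by omega), if_pos (by omega), sub_sub_cancel]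
    · simp only [lt_irrefl, if_false, show 2 * p - p = p by ring]
      exact hCσ p
    · rw [if_neg (by omega), if_pos hgt, if_pos (by omega), map_conjC_map_conjC]

section Splitting

variable {G : ℤ → Submodule ℂ (ℂ ⊗[ℝ] V)}

variable (W) in
/-- `B (m, p)` is the summand `B^{p, m-p}` of weight `m`. -/
structure IsRSplitting (G : ℤ → Submodule ℂ (ℂ ⊗[ℝ] V)) (B : ℤ × ℤ → Submodule ℂ (ℂ ⊗[ℝ] V)) :
    Prop where
  iSupIndep : iSupIndep B
  cx_eq : ∀ m, cx V (W m) = ⨆ i ∈ {i : ℤ × ℤ | i.1 ≤ m}, B i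
  eq_iSup : ∀ p, G p = ⨆ i ∈ {i : ℤ × ℤ | p ≤ i.2}, B i
  map_conjC : ∀ m p, (B (m, p)).map (conjC V) = B (m, m - p)

namespace IsRSplitting

variable {B : ℤ × ℤ → Submodule ℂ (ℂ ⊗[ℝ] V)} (hB : IsRSplitting W G B)
include hB

lemma le_cx {m : ℤ} (p : ℤ) : B (m, p) ≤ cx V (W m) :=
  hB.cx_eq m ▸ le_iSup₂_of_le (m, p) (le_refl m) le_rfl

lemma le_apply (m : ℤ) {p : ℤ} : B (m, p) ≤ G p :=
  hB.eq_iSup p ▸ le_iSup₂_of_le (m, p) (le_refl p) le_rfl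

lemma map_conjC_le (k : ℤ) :
    (G k).map (conjC V) ≤ ⨆ i ∈ {i : ℤ × ℤ | k ≤ i.1 - i.2}, B i := by
  rw [hB.eq_iSup k]
  simp only [Submodule.map_iSup]
  refine iSup₂_le fun i hi => ?_
  rw [hB.map_conjC]
  exact le_iSup₂_of_le (i.1, i.1 - i.2) (by simpa using hi) le_rfl

lemma cx_inf_map_conjC_le (n k : ℤ) : cx V (W n) ⊓ (G k).map (conjC V) ≤
    ⨆ i ∈ {i : ℤ × ℤ | i.1 ≤ n} ∩ {i | k ≤ i.1 - i.2}, B i := by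
  rw [← hB.iSupIndep.biSup_inf_biSup, ← hB.cx_eq]
  exact inf_le_inf_left _ (hB.map_conjC_le k)

theorem Ipq_eq (p q : ℤ) : Ipq W G p q = B (p + q, p) := by
  have hσ : B (p + q, p) = (B (p + q, q)).map (conjC V) := by
    rw [hB.map_conjC, add_sub_cancel_right]
  refine le_antisymm ?_ (le_inf (le_inf (hB.le_cx p) (hB.le_apply _))
    (le_sup_of_le_left (le_inf (hB.le_cx p) (hσ ▸ Submodule.map_mono (hB.le_apply _)))))
  have hR : Rpq W G p q = ⨆ i ∈ {i : ℤ × ℤ | i.1 ≤ p + q} ∩ {i | p ≤ i.2}, B i := by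
    rw [Rpq, hB.cx_eq, hB.eq_iSup, hB.iSupIndep.biSup_inf_biSup]
  have hL : Lpq W G p q ≤ ⨆ i ∈ {i : ℤ × ℤ | q ≤ i.1 - i.2} ∪ {i | i.2 < p}, B i := by
    refine sup_le (inf_le_right.trans ((hB.map_conjC_le q).trans
      (biSup_mono fun _ => Or.inl))) (iSup₂_le fun j hj => ?_)
    refine (hB.cx_inf_map_conjC_le _ _).trans (biSup_mono fun i hi => Or.inr ?_)
    simp only [Set.mem_inter_iff, Set.mem_ofPred_eq] at hi ⊢
    omega
  calc Ipq W G p q ≤ _ := inf_le_inf hR.le hL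
    _ = _ := hB.iSupIndep.biSup_inf_biSup _ _
    _ ≤ B (p + q, p) := iSup₂_le fun i hi => by
      obtain rfl : i = (p + q, p) := by
        simp only [Set.mem_inter_iff, Set.mem_union, Set.mem_ofPred_eq] at hi
        ext <;> simp <;> omega
      exact le_rfl

theorem map_conjC_Ipq (p q : ℤ) : (Ipq W G p q).map (conjC V) = Ipq W G q p := by
  rw [hB.Ipq_eq, hB.Ipq_eq, hB.map_conjC, add_sub_cancel_left, add_comm]

end IsRSplitting

end Splitting

namespace IsRMHS

variable (h : IsRMHS W F)
include h

theorem map (b : (ℂ ⊗[ℝ] V) ≃ₗ[ℂ] (ℂ ⊗[ℝ] V))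
    (hmap : ∀ i, (cx V (W i)).map (b : (ℂ ⊗[ℝ] V) →ₗ[ℂ] (ℂ ⊗[ℝ] V)) = cx V (W i))
    (hsub : ∀ i, ∀ x ∈ cx V (W i), b x - x ∈ cx V (W (i - 1))) :
    IsRMHS W (fun p => (F p).map (b : (ℂ ⊗[ℝ] V) →ₗ[ℂ] (ℂ ⊗[ℝ] V))) := by
  have hgr (n : ℤ) (A : Submodule ℂ (ℂ ⊗[ℝ] V)) := map_inf_sup_eq_inf_sup b (hmap n) (hsub n) A
  have hgrσ (n : ℤ) (A : Submodule ℂ (ℂ ⊗[ℝ] V)) :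
      (A.map (b : (ℂ ⊗[ℝ] V) →ₗ[ℂ] (ℂ ⊗[ℝ] V))).map (conjC V) ⊓ cx V (W n) ⊔ cx V (W (n - 1)) =
        A.map (conjC V) ⊓ cx V (W n) ⊔ cx V (W (n - 1)) := by
    simpa only [Submodule.map_sup, map_conjC_inf, map_conjC_cx] using
      congrArg (Submodule.map (conjC V)) (hgr n A)
  have sup_sup_eq (X Y N : Submodule ℂ (ℂ ⊗[ℝ] V)) : X ⊔ (Y ⊔ N) = X ⊔ N ⊔ (Y ⊔ N) := by
    rw [sup_sup_sup_comm, sup_idem, sup_assoc]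
  obtain ⟨a, ha⟩ := h.f_top
  obtain ⟨c, hc⟩ := h.f_bot
  refine ⟨h.monoW, fun p q hpq => Submodule.map_mono (h.antiF hpq), h.w_bot, h.w_top,
    ⟨a, fun p hp => by simp [ha p hp]⟩, ⟨c, fun p hp => by simp [hc p hp]⟩,
    fun n p => ?_, fun n p => ?_⟩
  · rw [hgr, hgrσ]
    exact h.gr_inf n p
  · rw [sup_sup_eq, hgr, hgrσ, ← sup_sup_eq]
    exact h.gr_sup n p

theorem exists_isRSplitting :
    ∃ (b : (ℂ ⊗[ℝ] V) ≃ₗ[ℂ] (ℂ ⊗[ℝ] V)) (B : ℤ × ℤ → Submodule ℂ (ℂ ⊗[ℝ] V)),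
    (∀ i, (cx V (W i)).map (b : (ℂ ⊗[ℝ] V) →ₗ[ℂ] (ℂ ⊗[ℝ] V)) = cx V (W i)) ∧
    (∀ i, ∀ x ∈ cx V (W i), b x - x ∈ cx V (W (i - 1))) ∧
    IsRSplitting W (fun p => (F p).map (b : (ℂ ⊗[ℝ] V) →ₗ[ℂ] (ℂ ⊗[ℝ] V))) B := by
  obtain ⟨Z, hZ, hZF⟩ := exists_isHodgeLift_le W F
  obtain ⟨B, hB, hBσ⟩ := exists_isHodgeLift_conj W F
  have hZN (i : ℤ × ℤ) : Disjoint (Z i) (cx V (W (i.1 - 1))) := (hZ i.1 i.2).1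
  have hBN (i : ℤ × ℤ) : Disjoint (B i) (cx V (W (i.1 - 1))) := (hB i.1 i.2).1
  have hZB (i : ℤ × ℤ) : Z i ⊔ cx V (W (i.1 - 1)) = B i ⊔ cx V (W (i.1 - 1)) :=
    (hZ i.1 i.2).2.trans (hB i.1 i.2).2.symm
  obtain ⟨b, hb⟩ := exists_linearEquiv_map_eq
    (hZ.iSupIndep h) (hZ.iSup_eq_top h) (hB.iSupIndep h) (hB.iSup_eq_top h) hZN hBN hZB
  have map_biSup (s : Set (ℤ × ℤ)) :
      (⨆ i ∈ s, Z i).map (b : (ℂ ⊗[ℝ] V) →ₗ[ℂ] (ℂ ⊗[ℝ] V)) = ⨆ i ∈ s, B i := by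
    simp only [Submodule.map_iSup, (hb _).1]
  refine ⟨b, B, fun m => ?_, fun m x hx => ?_, ⟨hB.iSupIndep h, hB.cx_eq h, fun p => ?_, hBσ⟩⟩
  · exact (congrArg _ (hZ.cx_eq h m)).trans ((map_biSup _).trans (hB.cx_eq h m).symm)
  · have hle : ⨆ i ∈ {i : ℤ × ℤ | i.1 ≤ m}, Z i ≤
        (cx V (W (m - 1))).comap ((b : (ℂ ⊗[ℝ] V) →ₗ[ℂ] (ℂ ⊗[ℝ] V)) - LinearMap.id) :=
      iSup₂_le fun i (hi : i.1 ≤ m) z hz => h.cx_mono (by omega) ((hb i).2 z hz)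
    exact hle (hZ.cx_eq h m ▸ hx)
  · rw [hZ.eq_iSup h hZF p, map_biSup]

end IsRMHS

end MHS

theorem exists_R_split_shift_general
    (V : Type*) [AddCommGroup V] [Module ℝ V]
    (W : ℤ → Submodule ℝ V) (F : ℤ → Submodule ℂ (ℂ ⊗[ℝ] V))
    (h : MHS.IsRMHS W F) :
    ∃ b : (ℂ ⊗[ℝ] V) ≃ₗ[ℂ] (ℂ ⊗[ℝ] V),
      (∀ i : ℤ, (MHS.cx V (W i)).map (b : (ℂ ⊗[ℝ] V) →ₗ[ℂ] (ℂ ⊗[ℝ] V)) =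
        MHS.cx V (W i)) ∧
      (∀ i : ℤ, ∀ x ∈ MHS.cx V (W i), b x - x ∈ MHS.cx V (W (i - 1))) ∧
      MHS.IsRMHS W
        (fun p => (F p).map (b : (ℂ ⊗[ℝ] V) →ₗ[ℂ] (ℂ ⊗[ℝ] V))) ∧
      (∀ p q : ℤ,
        (MHS.Ipq W (fun p => (F p).map (b : (ℂ ⊗[ℝ] V) →ₗ[ℂ] (ℂ ⊗[ℝ] V))) p q).map
            (MHS.conjC V) =
          MHS.Ipq W (fun p => (F p).map (b : (ℂ ⊗[ℝ] V) →ₗ[ℂ] (ℂ ⊗[ℝ] V))) q p) := by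
  obtain ⟨b, B, hmap, hsub, hB⟩ := h.exists_isRSplitting
  exact ⟨b, hmap, hsub, h.map b hmap hsub, hB.map_conjC_Ipq⟩

/-- Every `ℝ`-mixed Hodge structure `(W, F)` on `V` can be
split: there is a complex automorphism `b` of `V_ℂ` preserving `W_∗ ⊗ ℂ` and
inducing the identity on all graded pieces, such that `(W, bF)` is again an
`ℝ`-mixed Hodge structure which is `ℝ`-split, i.e. its Deligne subspaces
satisfy `σ(Ĩ^{p,q}) = Ĩ^{q,p}`. -/
theorem exists_R_split_shift
    (V : Type*) [AddCommGroup V] [Module ℝ V] [FiniteDimensional ℝ V]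
    (W : ℤ → Submodule ℝ V) (F : ℤ → Submodule ℂ (ℂ ⊗[ℝ] V))
    (h : MHS.IsRMHS W F) :
    ∃ b : (ℂ ⊗[ℝ] V) ≃ₗ[ℂ] (ℂ ⊗[ℝ] V),
      (∀ i : ℤ, (MHS.cx V (W i)).map (b : (ℂ ⊗[ℝ] V) →ₗ[ℂ] (ℂ ⊗[ℝ] V)) =
        MHS.cx V (W i)) ∧
      (∀ i : ℤ, ∀ x ∈ MHS.cx V (W i), b x - x ∈ MHS.cx V (W (i - 1))) ∧
      MHS.IsRMHS W
        (fun p => (F p).map (b : (ℂ ⊗[ℝ] V) →ₗ[ℂ] (ℂ ⊗[ℝ] V))) ∧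
      (∀ p q : ℤ,
        (MHS.Ipq W (fun p => (F p).map (b : (ℂ ⊗[ℝ] V) →ₗ[ℂ] (ℂ ⊗[ℝ] V))) p q).map
            (MHS.conjC V) =
          MHS.Ipq W (fun p => (F p).map (b : (ℂ ⊗[ℝ] V) →ₗ[ℂ] (ℂ ⊗[ℝ] V))) q p) :=
  exists_R_split_shift_general V W F h
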